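/- Let p ≥ 1, 1 ≤ m ≤ p, let H ~ Hypergeometric(p,m,m), and let G be the independent Rademacher random walk. Then for every t ≥ 0, E[exp(t·G_H²)] ≥ exp(t·m² − m·log(2ep/m)). Consequently, E[exp(t·G_H²)] cannot be bounded by an absolute constant unless t ≲ (1/m)·log(ep/m). -/

import Mathlib

open Real Finset

noncomputable section

/-- The probability `P(H = i)` for `H ~ Hypergeometric(p, m, m)`. -/
def hyperPMF (p m i : ℕ) : ℝ :=
  ((m.choose i : ℝ) * ((p - m).choose (m - i) : ℝ)) / (p.choose m : ℝ)

/-- `E[exp (t · G_i²)]` where `G_i` is the position of a symmetric (Rademacher)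
random walk after `i` steps. -/
def walkSqMGF (t : ℝ) (i : ℕ) : ℝ :=
  (1 / 2 ^ i) * ∑ s : Fin i → Bool, Real.exp (t * (∑ j, (if s j then (1 : ℝ) else -1)) ^ 2)

/-- `E[exp (t · G_H²)]` where `H ~ Hypergeometric(p, m, m)` and `G` is an independent
symmetric random walk. -/
def hyperWalkMGF (p m : ℕ) (t : ℝ) : ℝ :=
  ∑ i ∈ Finset.range (m + 1), hyperPMF p m i * walkSqMGF t i

/-- `E[exp (λ · H²)]` where `H ~ Hypergeometric(p, m, m)`. -/
def hyperSqMGF (p m : ℕ) (lam : ℝ) : ℝ :=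
  ∑ i ∈ Finset.range (m + 1), hyperPMF p m i * Real.exp (lam * (i : ℝ) ^ 2)

end

/-! Restricting the expectation to the event `{H = m, B₁ = ⋯ = B_m = 1}`, which has probability
`1 / (C(p,m) · 2^m)` and on which `G_H² = m²`, gives `E[exp (t G_H²)] ≥ exp (t m²) / (C(p,m) 2^m)`;
the bound `C(p,m) ≤ (e p / m)^m` turns this into the claim. -/

theorem Nat.choose_le_exp_one_mul_div_pow (n k : ℕ) :
    (n.choose k : ℝ) ≤ (exp 1 * n / k) ^ k := by
  rcases k.eq_zero_or_pos with rfl | hk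
  · simp
  have hkk : (0 : ℝ) < (k : ℝ) ^ k := by positivity
  calc (n.choose k : ℝ) ≤ (n : ℝ) ^ k / k.factorial := Nat.choose_le_pow_div k n
    _ ≤ (n : ℝ) ^ k * (exp 1 ^ k / (k : ℝ) ^ k) := by
        rw [div_eq_mul_inv]
        gcongr
        rw [le_div_iff₀ hkk, inv_mul_eq_div, ← exp_nat_mul, mul_one]
        exact pow_div_factorial_le_exp _ (Nat.cast_nonneg k) k
    _ = (exp 1 * n / k) ^ k := by rw [div_pow, mul_pow]; ring

lemma hyperPMF_nonneg (p m i : ℕ) : 0 ≤ hyperPMF p m i := by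
  unfold hyperPMF; positivity

lemma hyperPMF_self (p m : ℕ) : hyperPMF p m m = 1 / (p.choose m : ℝ) := by
  simp [hyperPMF]

lemma walkSqMGF_nonneg (t : ℝ) (i : ℕ) : 0 ≤ walkSqMGF t i := by
  unfold walkSqMGF; positivity

lemma exp_mul_sq_div_two_pow_le_walkSqMGF (t : ℝ) (i : ℕ) :
    exp (t * (i : ℝ) ^ 2) / 2 ^ i ≤ walkSqMGF t i := by
  have hup : exp (t * (i : ℝ) ^ 2) ≤
      ∑ s : Fin i → Bool, exp (t * (∑ j, (if s j then (1 : ℝ) else -1)) ^ 2) := by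
    simpa using single_le_sum (f := fun s : Fin i → Bool =>
      exp (t * (∑ j, (if s j then (1 : ℝ) else -1)) ^ 2))
      (fun s _ => (exp_pos _).le) (mem_univ fun _ => true)
  rw [walkSqMGF, one_div_mul_eq_div]
  gcongr

lemma hyperPMF_mul_walkSqMGF_le_hyperWalkMGF (p m : ℕ) (t : ℝ) {i : ℕ} (hi : i ≤ m) :
    hyperPMF p m i * walkSqMGF t i ≤ hyperWalkMGF p m t :=
  single_le_sum (f := fun j => hyperPMF p m j * walkSqMGF t j)
    (fun j _ => mul_nonneg (hyperPMF_nonneg p m j) (walkSqMGF_nonneg t j))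
    (mem_range_succ_iff.2 hi)

theorem hyperWalkMGF_lower_bound_general (p m : ℕ) (hmp : m ≤ p) :
    ∀ t : ℝ, 0 ≤ t →
      Real.exp (t * (m : ℝ) ^ 2 - (m : ℝ) * Real.log (2 * Real.exp 1 * p / m)) ≤
        hyperWalkMGF p m t := by
  intro t _
  have hcount_pos : 0 < (p.choose m : ℝ) * 2 ^ m := by
    have := Nat.choose_pos hmp
    positivity
  have hcount : (p.choose m : ℝ) * 2 ^ m ≤ (2 * exp 1 * p / m) ^ m := by
    rw [mul_comm, mul_assoc, mul_div_assoc, mul_pow]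
    gcongr
    exact Nat.choose_le_exp_one_mul_div_pow p m
  calc exp (t * (m : ℝ) ^ 2 - m * log (2 * exp 1 * p / m))
      ≤ exp (t * (m : ℝ) ^ 2 - log ((p.choose m : ℝ) * 2 ^ m)) := by
        rw [← log_pow]
        gcongr
    _ = hyperPMF p m m * (exp (t * (m : ℝ) ^ 2) / 2 ^ m) := by
        rw [exp_sub, exp_log hcount_pos, hyperPMF_self]
        field_simp
    _ ≤ hyperPMF p m m * walkSqMGF t m := by
        gcongr
        · exact hyperPMF_nonneg p m m
        · exact exp_mul_sq_div_two_pow_le_walkSqMGF t m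
    _ ≤ hyperWalkMGF p m t := hyperPMF_mul_walkSqMGF_le_hyperWalkMGF p m t le_rfl

/-- lower bound on the MGF of the squared stopped random walk,
showing the necessity of `t ≲ (1/m)·log(ep/m)`. -/
theorem hyperWalkMGF_lower_bound (p m : ℕ) (hm : 1 ≤ m) (hmp : m ≤ p) :
    ∀ t : ℝ, 0 ≤ t →
      Real.exp (t * (m : ℝ) ^ 2 - (m : ℝ) * Real.log (2 * Real.exp 1 * p / m)) ≤
        hyperWalkMGF p m t :=
  hyperWalkMGF_lower_bound_general p m hmp
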